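/- For every nonnegative integer n, \int_0^1 u^n \left( \frac{1}{\log u} + \frac{1}{1-u} \right) du = \gamma - S_n, where S_n = \sum_{k=1}^n \frac{1}{k} - \log(n+1) and \gamma is Euler's constant. -/

import Mathlib

/-!
Writing `I n` for the integral, the identity
`(u ^ n - u ^ (n + 1)) * (1 / log u + 1 / (1 - u)) = (u ^ n - u ^ (n + 1)) / log u + u ^ n`
and the Frullani-type integral `∫₀¹ (u ^ b - u ^ a) / log u = log ((b + 1) / (a + 1))`
(Fubini applied to `u ^ s` on `[0, 1] × [a, b]`) give
`I n - I (n + 1) = 1 / (n + 1) - log ((n + 2) / (n + 1)) = S (n + 1) - S n`.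
So `I n + S n` is constant, and since `0 ≤ I n ≤ 1 / (n + 1)` and `S n → γ`,
the constant is `γ`.
-/

open Finset intervalIntegral

noncomputable def H (m : ℕ) : ℝ := ∑ j ∈ Finset.range m, (1 : ℝ) / (j + 1)

open Real Set MeasureTheory Filter Topology
open scoped Interval

noncomputable def gammaKernel (u : ℝ) : ℝ := 1 / log u + 1 / (1 - u)

noncomputable def gammaKernelMoment (n : ℕ) : ℝ := ∫ u in (0 : ℝ)..1, u ^ n * gammaKernel u

lemma measurable_gammaKernel : Measurable gammaKernel := by
  unfold gammaKernel
  fun_prop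

/-- On `(0, 1)` this is `1 - u ≤ -log u ≤ (1 - u) / u`; at the endpoints the junk values
`log 0 = log 1 = 1 / 0 = 0` give `gammaKernel 0 = 1` and `gammaKernel 1 = 0`. -/
lemma gammaKernel_mem_Icc {u : ℝ} (hu : u ∈ Set.Icc 0 1) : gammaKernel u ∈ Set.Icc 0 1 := by
  rcases hu.1.eq_or_lt with rfl | hu0
  · simp [gammaKernel]
  rcases hu.2.eq_or_lt with rfl | hu1
  · simp [gammaKernel]
  have hlog : log u < 0 := log_neg hu0 hu1
  have hlog_le : log u ≤ u - 1 := log_le_sub_one_of_pos hu0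
  have hlog_ge : 1 - u⁻¹ ≤ log u := one_sub_inv_le_log_of_pos hu0
  have h1u : 0 < 1 - u := by linarith
  have hkernel : gammaKernel u = 1 / (1 - u) - 1 / -log u := by
    rw [gammaKernel, one_div_neg_eq_neg_one_div, sub_neg_eq_add, add_comm]
  rw [hkernel]
  constructor
  · have := one_div_le_one_div_of_le h1u (by linarith : 1 - u ≤ -log u)
    linarith
  · have hmul : u * -log u ≤ 1 - u := by
      have := mul_le_mul_of_nonneg_left hlog_ge hu0.le
      rw [mul_sub, mul_inv_cancel₀ hu0.ne'] at this
      linarith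
    rw [sub_le_iff_le_add]
    calc 1 / (1 - u) = 1 + u / (1 - u) := by field_simp; ring
      _ ≤ 1 + 1 / -log u := by
        gcongr 1 + ?_
        rw [div_le_div_iff₀ h1u (by linarith)]
        linarith

lemma pow_mul_gammaKernel_mem_Icc (n : ℕ) {u : ℝ} (hu : u ∈ Set.Icc 0 1) :
    u ^ n * gammaKernel u ∈ Set.Icc 0 (u ^ n) := by
  obtain ⟨hk0, hk1⟩ := gammaKernel_mem_Icc hu
  have hun : 0 ≤ u ^ n := pow_nonneg hu.1 n
  exact ⟨mul_nonneg hun hk0, mul_le_of_le_one_right hun hk1⟩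

lemma intervalIntegrable_pow_mul_gammaKernel (n : ℕ) :
    IntervalIntegrable (fun u => u ^ n * gammaKernel u) volume 0 1 := by
  refine ((continuous_pow n).intervalIntegrable 0 1).mono_fun'
    ((measurable_id.pow_const n).mul measurable_gammaKernel).aestronglyMeasurable ?_
  refine ae_restrict_of_forall_mem measurableSet_uIoc fun u hu => ?_
  rw [uIoc_of_le zero_le_one] at hu
  obtain ⟨h0, h1⟩ := pow_mul_gammaKernel_mem_Icc n (Set.Ioc_subset_Icc_self hu)
  simpa only [norm_of_nonneg h0] using h1

lemma gammaKernelMoment_mem_Icc (n : ℕ) :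
    gammaKernelMoment n ∈ Set.Icc 0 (1 / ((n : ℝ) + 1)) := by
  have hpow : ∫ u in (0 : ℝ)..1, u ^ n = 1 / (n + 1) := by simp [integral_pow]
  refine ⟨integral_nonneg zero_le_one fun u hu => (pow_mul_gammaKernel_mem_Icc n hu).1, ?_⟩
  rw [← hpow]
  exact integral_mono_on zero_le_one (intervalIntegrable_pow_mul_gammaKernel n)
    ((continuous_pow n).intervalIntegrable 0 1) fun u hu => (pow_mul_gammaKernel_mem_Icc n hu).2

lemma tendsto_gammaKernelMoment_atTop : Tendsto gammaKernelMoment atTop (𝓝 0) :=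
  squeeze_zero (fun n => (gammaKernelMoment_mem_Icc n).1)
    (fun n => (gammaKernelMoment_mem_Icc n).2) tendsto_one_div_add_atTop_nhds_zero_nat

lemma integral_const_rpow {u : ℝ} (hu0 : 0 < u) (hu1 : u ≠ 1) (a b : ℝ) :
    ∫ s in a..b, u ^ s = (u ^ b - u ^ a) / log u := by
  have hlog : log u ≠ 0 := log_ne_zero_of_pos_of_ne_one hu0 hu1
  refine integral_eq_sub_of_hasDerivAt (f := fun s => u ^ s / log u) (fun s _ => ?_)
    ((continuous_const_rpow hu0.ne').intervalIntegrable a b) |>.trans (sub_div _ _ _).symm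
  simpa [hlog] using ((hasStrictDerivAt_const_rpow hu0 s).hasDerivAt.div_const (log u))

lemma integral_rpow_sub_rpow_div_log {a b : ℝ} (ha : 0 ≤ a) (hb : 0 ≤ b) :
    ∫ u in (0 : ℝ)..1, (u ^ b - u ^ a) / log u = log ((b + 1) / (a + 1)) := by
  have hinner : EqOn (fun u => (u ^ b - u ^ a) / log u) (fun u => ∫ s in a..b, u ^ s) (Ioo 0 1) :=
    fun u hu => (integral_const_rpow hu.1 hu.2.ne a b).symm
  have hint : IntegrableOn (Function.uncurry fun u s : ℝ => u ^ s) (Ι 0 1 ×ˢ Ι a b) := by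
    refine Measure.integrableOn_of_bounded (M := 1)
      (by simp [Measure.volume_eq_prod, Real.volume_Ioc])
      (measurable_fst.pow measurable_snd).aestronglyMeasurable ?_
    refine ae_restrict_of_forall_mem (measurableSet_uIoc.prod measurableSet_uIoc) ?_
    rintro ⟨u, s⟩ ⟨hu, hs⟩
    rw [uIoc_of_le zero_le_one] at hu
    have hs0 : 0 ≤ s := (le_min ha hb).trans hs.1.le
    simpa [abs_of_nonneg (rpow_nonneg hu.1.le s)] using rpow_le_one hu.1.le hu.2 hs0
  calc ∫ u in (0 : ℝ)..1, (u ^ b - u ^ a) / log u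
      = ∫ u in (0 : ℝ)..1, ∫ s in a..b, u ^ s := integral_congr_Ioo_of_le zero_le_one hinner
    _ = ∫ s in a..b, ∫ u in (0 : ℝ)..1, u ^ s := intervalIntegral_intervalIntegral_swap hint
    _ = ∫ s in a..b, 1 / (s + 1) := by
      refine integral_congr fun s hs => ?_
      have hs0 : 0 ≤ s := (le_min ha hb).trans hs.1
      simp [integral_rpow (Or.inl (by linarith : (-1 : ℝ) < s)),
        zero_rpow (by linarith : s + 1 ≠ 0)]
    _ = log ((b + 1) / (a + 1)) := by
      rw [integral_comp_add_right (fun x => 1 / x),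
        integral_one_div_of_pos (by linarith) (by linarith)]

lemma gammaKernelMoment_sub_succ (n : ℕ) :
    gammaKernelMoment n - gammaKernelMoment (n + 1) = 1 / (n + 1) + log ((n + 1) / (n + 2)) := by
  have hpt : EqOn (fun u : ℝ => u ^ n * gammaKernel u - u ^ (n + 1) * gammaKernel u - u ^ n)
      (fun u => (u ^ (n : ℝ) - u ^ ((n + 1 : ℕ) : ℝ)) / log u) (Ioo 0 1) := by
    intro u hu
    have h1u : 1 - u ≠ 0 := sub_ne_zero.2 hu.2.ne'
    simp only [rpow_natCast, gammaKernel]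
    field_simp
    ring
  have hlog : ∫ u in (0 : ℝ)..1, (u ^ (n : ℝ) - u ^ ((n + 1 : ℕ) : ℝ)) / log u =
      log ((n + 1) / (n + 2)) := by
    rw [integral_rpow_sub_rpow_div_log (by positivity) (by positivity)]
    push_cast
    ring_nf
  rw [← integral_congr_Ioo_of_le zero_le_one hpt,
    integral_sub ((intervalIntegrable_pow_mul_gammaKernel n).sub
      (intervalIntegrable_pow_mul_gammaKernel (n + 1))) ((continuous_pow n).intervalIntegrable 0 1),
    integral_sub (intervalIntegrable_pow_mul_gammaKernel n)
      (intervalIntegrable_pow_mul_gammaKernel (n + 1)), integral_pow] at hlog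
  rw [gammaKernelMoment, gammaKernelMoment, ← hlog]
  simp

lemma gammaKernelMoment_add_eulerMascheroniSeq_succ (n : ℕ) :
    gammaKernelMoment (n + 1) + eulerMascheroniSeq (n + 1) =
      gammaKernelMoment n + eulerMascheroniSeq n := by
  have := gammaKernelMoment_sub_succ n
  rw [log_div (by positivity) (by positivity)] at this
  simp only [eulerMascheroniSeq, harmonic_succ]
  push_cast
  rw [add_assoc, one_add_one_eq_two, ← one_div]
  linarith

lemma gammaKernelMoment_add_eulerMascheroniSeq (n : ℕ) :
    gammaKernelMoment n + eulerMascheroniSeq n = eulerMascheroniConstant := by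
  have hconst : ∀ m, gammaKernelMoment m + eulerMascheroniSeq m =
      gammaKernelMoment 0 + eulerMascheroniSeq 0 :=
    Nat.rec rfl fun m ih => (gammaKernelMoment_add_eulerMascheroniSeq_succ m).trans ih
  have hlim := tendsto_gammaKernelMoment_atTop.add tendsto_eulerMascheroniSeq
  rw [zero_add] at hlim
  rw [hconst]
  exact tendsto_nhds_unique tendsto_const_nhds (hlim.congr hconst)

theorem integral_eq_gamma_sub_S (n : ℕ) :
    ∫ u in (0:ℝ)..1, u^n * (1 / Real.log u + 1 / (1 - u))
      = Real.eulerMascheroniConstant - (H n - Real.log ((n : ℝ) + 1)) := by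
  have hH : H n = harmonic n := by simp [H, harmonic]
  rw [hH, ← eulerMascheroniSeq, ← gammaKernelMoment_add_eulerMascheroniSeq n]
  exact (add_sub_cancel_right _ _).symm
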